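/- Each Krammer representation map σ_i is an invertible Λ-linear endomorphism of the free Λ-module V, so the Krammer representation defines a group homomorphism from the braid group B_n to GL(V). -/

import Mathlib

open LaurentPolynomial in
/-- The ring `Λ = ℤ[q^{±1}, t^{±1}]` of Laurent polynomials in two variables. -/
abbrev Lam : Type := LaurentPolynomial (LaurentPolynomial ℤ)

/-- The variable `q` of `Λ`. -/
noncomputable def lamq : Lam := LaurentPolynomial.C (LaurentPolynomial.T 1)

/-- The variable `t` of `Λ`. -/
noncomputable def lamt : Lam := LaurentPolynomial.T 1

/-- The index set `{(j,k) : 1 ≤ j < k ≤ n}` for the basis of the Krammer representation. -/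
abbrev KIdx (n : ℕ) := {p : ℕ × ℕ // 1 ≤ p.1 ∧ p.1 < p.2 ∧ p.2 ≤ n}

/-- The free `Λ`-module `V` with basis `F_{j,k}` for `1 ≤ j < k ≤ n`. -/
abbrev KV (n : ℕ) := KIdx n →₀ Lam

/-- The basis vector `F_{j,k}`. -/
noncomputable def KF (n : ℕ) (j k : ℕ) (h : 1 ≤ j ∧ j < k ∧ k ≤ n) : KV n :=
  Finsupp.single ⟨(j, k), h⟩ 1

/-- The image of the basis vector `F_{j,k}` under Krammer's map `σ_i`. -/
noncomputable def kimg (n : ℕ) (i : ℕ) : KIdx n → KV n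
  | ⟨(j, k), hp⟩ =>
    if h1 : i + 1 = j ∧ 1 ≤ i then
      lamq • KF n i k ⟨h1.2, by omega, by omega⟩
        + (lamq ^ 2 - lamq) • KF n i j ⟨h1.2, by omega, by omega⟩
        + (1 - lamq) • KF n j k hp
    else if h2 : i = j ∧ i + 1 = k then
      (-(lamt * lamq ^ 2)) • KF n j k hp
    else if h3 : i = j then
      KF n (j + 1) k ⟨by omega, by omega, by omega⟩
    else if h4 : i + 1 = k then
      lamq • KF n j i ⟨by omega, by omega, by omega⟩
        + (1 - lamq) • KF n j k hp
        + ((1 - lamq) * (lamq * lamt)) • KF n i k ⟨by omega, by omega, by omega⟩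
    else if h5 : i = k ∧ k + 1 ≤ n then
      KF n j (k + 1) ⟨by omega, by omega, by omega⟩
    else
      KF n j k hp

/-- Krammer's linear map `σ_i` on `V` (for `1 ≤ i ≤ n-1`). -/
noncomputable def krammerσ (n : ℕ) (i : ℕ) : KV n →ₗ[Lam] KV n :=
  Finsupp.lift (KV n) Lam (KIdx n) (kimg n i)

/-- The braid relations on `m` generators. -/
def braidRels (m : ℕ) : Set (FreeGroup (Fin m)) :=
  { r | (∃ i j : Fin m, (i : ℕ) + 1 < (j : ℕ) ∧
          r = FreeGroup.of i * FreeGroup.of j * (FreeGroup.of i)⁻¹ * (FreeGroup.of j)⁻¹) ∨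
        (∃ i j : Fin m, (i : ℕ) + 1 = (j : ℕ) ∧
          r = FreeGroup.of i * FreeGroup.of j * FreeGroup.of i *
              (FreeGroup.of j * FreeGroup.of i * FreeGroup.of j)⁻¹) }

/-- The braid group `B_n`, presented with the Artin generators `σ_1, …, σ_{n-1}`. -/
abbrev BraidGroup (n : ℕ) := PresentedGroup (braidRels (n - 1))

/-- The Artin generator `σ_{i+1}` of `B_n` (for `i : Fin (n-1)`). -/
def braidGen (n : ℕ) (i : Fin (n - 1)) : BraidGroup n := PresentedGroup.of i

/-! The cubic relation `(σ_i - 1)(σ_i + q)(σ_i + t q²) = 0` has constant term `-t q³`, a unit of `Λ`,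
so each `σ_i` is invertible with inverse a polynomial in `σ_i`. The braid relations are verified on
the basis `F_{j,k}`: in each case the positions of `j` and `k` relative to the indices involved
determine every `σ` explicitly, and what remains is an identity of Laurent polynomials. -/

open Polynomial

theorem isUnit_lamq : IsUnit lamq := (LaurentPolynomial.isUnit_T 1).map LaurentPolynomial.C

theorem isUnit_lamt : IsUnit lamt := LaurentPolynomial.isUnit_T 1

theorem isUnit_of_mul_aeval_eq_algebraMap {R A : Type*} [CommSemiring R] [Semiring A]
    [Algebra R A] {a : A} {P : R[X]} {c : R} (h : a * aeval a P = algebraMap R A c)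
    (hc : IsUnit c) : IsUnit a := by
  have hcomm : Commute a (aeval a P) := by
    simpa using (Commute.all X P).map (aeval a)
  exact (hcomm.isUnit_mul_iff.1 (h ▸ hc.map (algebraMap R A))).1

theorem krammerσ_KF (n i j k : ℕ) (hp : 1 ≤ j ∧ j < k ∧ k ≤ n) :
    krammerσ n i (KF n j k hp) = kimg n i ⟨(j, k), hp⟩ := by
  simp [krammerσ, KF]

theorem KV.end_ext {n : ℕ} {f g : Module.End Lam (KV n)}
    (h : ∀ j k hp, f (KF n j k hp) = g (KF n j k hp)) : f = g :=
  Finsupp.lhom_ext' fun ⟨(j, k), hp⟩ => LinearMap.ext_ring (h j k hp)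

/-- `X * krammerQuadratic - t q³ = (X - 1) (X + q) (X + t q²)`. -/
noncomputable def krammerQuadratic : Lam[X] :=
  X ^ 2 + C (lamq + lamt * lamq ^ 2 - 1) * X + C (lamt * lamq ^ 3 - lamq - lamt * lamq ^ 2)

theorem krammerσ_mul_aeval_krammerQuadratic (n i : ℕ) :
    krammerσ n i * aeval (krammerσ n i) krammerQuadratic = algebraMap Lam _ (lamt * lamq ^ 3) := by
  simp only [krammerQuadratic, map_add, map_mul, aeval_X, aeval_C, pow_two,
    Algebra.algebraMap_eq_smul_one]
  refine KV.end_ext fun j k hp => ?_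
  simp only [Module.End.mul_apply, LinearMap.add_apply, LinearMap.smul_apply,
    Module.End.one_apply, map_add, map_smul, krammerσ_KF]
  simp only [kimg]
  split_ifs <;> try omega
  all_goals simp only [map_add, map_smul, krammerσ_KF, kimg, true_and]
  all_goals try (split_ifs <;> try omega)
  all_goals simp only [map_add, map_smul, krammerσ_KF, kimg, true_and, and_true]
  all_goals try (split_ifs <;> try omega)
  all_goals (casesm* _ ∧ _)
  all_goals subst_vars
  all_goals module

theorem isUnit_krammerσ (n i : ℕ) : IsUnit (krammerσ n i : Module.End Lam (KV n)) :=
  isUnit_of_mul_aeval_eq_algebraMap (krammerσ_mul_aeval_krammerQuadratic n i)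
    (isUnit_lamt.mul (isUnit_lamq.pow 3))

set_option maxHeartbeats 1000000 in
theorem krammerσ_commute (n a b : ℕ) (hab : a + 1 < b) :
    Commute (krammerσ n a : Module.End Lam (KV n)) (krammerσ n b) := by
  refine KV.end_ext fun j k hp => ?_
  simp only [Module.End.mul_apply, krammerσ_KF]
  simp only [kimg]
  split_ifs <;> try omega
  all_goals simp only [map_add, map_smul, krammerσ_KF, kimg]
  all_goals try (split_ifs <;> try omega)
  all_goals (casesm* _ ∧ _)
  all_goals subst_vars
  all_goals module

set_option maxHeartbeats 2000000 in
theorem krammerσ_braid (n a b : ℕ) (ha : 1 ≤ a) (hab : a + 1 = b) (hb : b < n) :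
    (krammerσ n a * krammerσ n b * krammerσ n a : Module.End Lam (KV n)) =
      krammerσ n b * krammerσ n a * krammerσ n b := by
  subst hab
  refine KV.end_ext fun j k hp => ?_
  simp only [Module.End.mul_apply, krammerσ_KF]
  simp only [kimg]
  split_ifs <;> try omega
  all_goals simp only [map_add, map_smul, krammerσ_KF, kimg, true_and, and_true]
  all_goals try (split_ifs <;> try omega)
  all_goals simp only [map_add, map_smul, krammerσ_KF, kimg, true_and, and_true]
  all_goals try (split_ifs <;> try omega)
  all_goals (casesm* _ ∧ _)
  all_goals subst_vars
  all_goals module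

theorem lift_eq_one_of_mem_braidRels {G : Type*} [Group G] {m : ℕ} (g : Fin m → G)
    (hcomm : ∀ i j : Fin m, (i : ℕ) + 1 < j → Commute (g i) (g j))
    (hbraid : ∀ i j : Fin m, (i : ℕ) + 1 = j → g i * g j * g i = g j * g i * g j) :
    ∀ r ∈ braidRels m, FreeGroup.lift g r = 1 := by
  rintro r (⟨i, j, hij, rfl⟩ | ⟨i, j, hij, rfl⟩)
  · simp only [map_mul, map_inv, FreeGroup.lift_apply_of, (hcomm i j hij).eq]
    group
  · simp only [map_mul, map_inv, FreeGroup.lift_apply_of, hbraid i j hij]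
    group

/-- Each Krammer map `σ_i` is an invertible `Λ`-linear endomorphism of `V`, and the
Krammer representation defines a group homomorphism from `B_n` to `GL(V)`. -/
theorem krammer_representation (n : ℕ) :
    (∀ i : ℕ, 1 ≤ i → i < n → IsUnit (krammerσ n i : Module.End Lam (KV n))) ∧
    ∃ f : BraidGroup n →* (Module.End Lam (KV n))ˣ,
      ∀ idx : Fin (n - 1),
        ((f (braidGen n idx) : (Module.End Lam (KV n))ˣ) : Module.End Lam (KV n)) =
          krammerσ n ((idx : ℕ) + 1) := by
  let g (i : Fin (n - 1)) : (Module.End Lam (KV n))ˣ := (isUnit_krammerσ n (i + 1)).unit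
  have hrels : ∀ r ∈ braidRels (n - 1), FreeGroup.lift g r = 1 :=
    lift_eq_one_of_mem_braidRels g
      (fun i j hij => Units.ext (krammerσ_commute n (i + 1) (j + 1) (by omega)))
      (fun i j hij => Units.ext (krammerσ_braid n (i + 1) (j + 1) (by omega) (by omega) (by omega)))
  exact ⟨fun i _ _ => isUnit_krammerσ n i, PresentedGroup.toGroup hrels,
    fun idx => congrArg Units.val (PresentedGroup.toGroup.of hrels)⟩
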